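/- Let m ≥ 3 be an odd integer and let Σ be the order-two subgroup of G₃(m) generated by the involution [j,j]. Then the normalizer of Σ in G₃(m) has exactly 8 elements and is isomorphic to the direct product ℤ/4ℤ × ℤ/2ℤ. -/

import Mathlib

noncomputable section

open Quaternion Real

/-- The quaternion `i`. -/
def qi : Quaternion ℝ := ⟨0, 1, 0, 0⟩
/-- The quaternion `j`. -/
def qj : Quaternion ℝ := ⟨0, 0, 1, 0⟩
/-- The quaternion `k`. -/
def qk : Quaternion ℝ := ⟨0, 0, 0, 1⟩
/-- The unit quaternion `e_s = cos(π/s) + sin(π/s) i`. -/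
def es (s : ℕ) : Quaternion ℝ := ⟨Real.cos (Real.pi / s), Real.sin (Real.pi / s), 0, 0⟩

lemma norm_eq_one_of_normSq {a : Quaternion ℝ} (h : Quaternion.normSq a = 1) : ‖a‖ = 1 := by
  have h2 : ‖a‖ * ‖a‖ = 1 := by rw [← Quaternion.normSq_eq_norm_mul_self, h]
  rcases mul_self_eq_one_iff.1 h2 with h' | h'
  · exact h'
  · nlinarith [norm_nonneg a]

lemma norm_qi : ‖qi‖ = 1 := norm_eq_one_of_normSq (by rw [Quaternion.normSq_def']; simp [qi])
lemma norm_qj : ‖qj‖ = 1 := norm_eq_one_of_normSq (by rw [Quaternion.normSq_def']; simp [qj])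
lemma norm_qk : ‖qk‖ = 1 := norm_eq_one_of_normSq (by rw [Quaternion.normSq_def']; simp [qk])
lemma norm_es (s : ℕ) : ‖es s‖ = 1 :=
  norm_eq_one_of_normSq (by
    rw [Quaternion.normSq_def']
    simp only [es]
    simp [Real.sin_sq_add_cos_sq, Real.cos_sq_add_sin_sq])

lemma self_mul_star_of_norm_one {a : Quaternion ℝ} (h : ‖a‖ = 1) : a * star a = 1 := by
  rw [Quaternion.self_mul_star]
  have h1 : Quaternion.normSq a = 1 := by rw [Quaternion.normSq_eq_norm_mul_self, h, mul_one]
  rw [h1]; norm_num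

lemma star_mul_self_of_norm_one {a : Quaternion ℝ} (h : ‖a‖ = 1) : star a * a = 1 := by
  rw [Quaternion.star_mul_self]
  have h1 : Quaternion.normSq a = 1 := by rw [Quaternion.normSq_eq_norm_mul_self, h, mul_one]
  rw [h1]; norm_num

/-- The rotation `[l,r] : x ↦ l̄ x r` of `ℝ⁴ ≅ ℍ`, for unit quaternions `l, r`. -/
def qrot (l r : Quaternion ℝ) (hl : ‖l‖ = 1) (hr : ‖r‖ = 1) :
    Quaternion ℝ ≃ₗ[ℝ] Quaternion ℝ where
  toFun x := star l * x * r
  invFun x := l * x * star r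
  map_add' x y := by noncomm_ring
  map_smul' c x := by simp [mul_smul_comm, smul_mul_assoc]
  left_inv x := by
    have h : l * (star l * x * r) * star r = (l * star l) * x * (r * star r) := by noncomm_ring
    simp [h, self_mul_star_of_norm_one hl, self_mul_star_of_norm_one hr]
  right_inv x := by
    have h : star l * (l * x * star r) * r = (star l * l) * x * (star r * r) := by noncomm_ring
    simp [h, star_mul_self_of_norm_one hl, star_mul_self_of_norm_one hr]

/-- The group `G₁(m)`. -/
def G1 (m : ℕ) : Subgroup (Quaternion ℝ ≃ₗ[ℝ] Quaternion ℝ) :=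
  Subgroup.closure
    {qrot (es m) 1 (norm_es m) norm_one,
     qrot 1 qi norm_one norm_qi,
     qrot 1 qj norm_one norm_qj,
     qrot qj (es 4) norm_qj (norm_es 4)}

/-- The group `G₂(m)`. -/
def G2 (m : ℕ) : Subgroup (Quaternion ℝ ≃ₗ[ℝ] Quaternion ℝ) :=
  Subgroup.closure
    {qrot (es m) 1 (norm_es m) norm_one,
     qrot 1 qi norm_one norm_qi,
     qrot (es (2 * m)) qj (norm_es (2 * m)) norm_qj,
     qrot qj (es 4) norm_qj (norm_es 4)}

/-- The group `G₃(m)`. -/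
def G3 (m : ℕ) : Subgroup (Quaternion ℝ ≃ₗ[ℝ] Quaternion ℝ) :=
  Subgroup.closure
    {qrot (es m) 1 (norm_es m) norm_one,
     qrot 1 qi norm_one norm_qi,
     qrot qj 1 norm_qj norm_one,
     qrot 1 qj norm_one norm_qj}

/-- The group `F₁(m)`. -/
def F1 (m : ℕ) : Subgroup (Quaternion ℝ ≃ₗ[ℝ] Quaternion ℝ) :=
  Subgroup.closure
    {qrot (es m) qi (norm_es m) norm_qi,
     qrot 1 qj norm_one norm_qj}

/-- The order-two subgroup `Σ` generated by the involution `[j, j]`. -/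
def SigmaJJ : Subgroup (Quaternion ℝ ≃ₗ[ℝ] Quaternion ℝ) :=
  Subgroup.closure {qrot qj qj norm_qj norm_qj}

/-- The normalizer of `Σ` in `G₃(m)`, i.e. `{g ∈ G₃(m) : g Σ g⁻¹ = Σ}`. -/
def normalizerInG3 (m : ℕ) : Subgroup (Quaternion ℝ ≃ₗ[ℝ] Quaternion ℝ) :=
  Subgroup.normalizer (SigmaJJ : Set (Quaternion ℝ ≃ₗ[ℝ] Quaternion ℝ)) ⊓ G3 m

/-!
The normalizer of a subgroup of order two is the centralizer of its generator. Every element of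
`G₃(m)` is a rotation `[l, r]` with `l` in the binary dihedral group generated by `e_m` and `j`
and `r` in the quaternion group `{±1, ±i, ±j, ±k}`. Since `[l, r] = [-l, -r]` and no other pair
gives the same rotation, `[l, r]` commutes with `[j, j]` iff `l` and `r` both commute or both
anticommute with `j`. For odd `m` nothing in the binary dihedral group anticommutes with `j`, so
`l, r ∈ {±1, ±j}`, and the normalizer is generated by `[j, 1]` of order 4 and `[j, j]` of order 2,
which commute and generate subgroups meeting trivially.
-/

section Involution

variable {G : Type*} [Group G] {s g x : G}

lemma eq_one_or_eq_of_mem_zpowers (hs : s ^ 2 = 1) (hx : x ∈ Subgroup.zpowers s) :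
    x = 1 ∨ x = s := by
  obtain ⟨k, rfl⟩ := Subgroup.mem_zpowers_iff.mp hx
  have hs' : s ^ (2 : ℤ) = 1 := by rw [zpow_two, ← sq, hs]
  obtain ⟨n, rfl | rfl⟩ := Int.even_or_odd' k
  · exact Or.inl (by rw [zpow_mul, hs', one_zpow])
  · exact Or.inr (by rw [zpow_add, zpow_mul, hs', one_zpow, one_mul, zpow_one])

lemma mem_normalizer_zpowers_iff_commute (hs : s ^ 2 = 1) :
    g ∈ Subgroup.normalizer (Subgroup.zpowers s : Set G) ↔ Commute g s := by
  constructor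
  · intro hg
    rcases eq_one_or_eq_of_mem_zpowers hs
      ((Subgroup.mem_normalizer_iff.mp hg s).mp (Subgroup.mem_zpowers s)) with h | h
    · rw [conj_eq_one_iff.mp h]
      exact Commute.one_right g
    · exact mul_inv_eq_iff_eq_mul.mp h
  · intro hg
    refine Subgroup.centralizer_le_normalizer _ (Subgroup.mem_centralizer_iff.mpr ?_)
    rintro _ ⟨k, rfl⟩
    exact ((hg.zpow_right k).eq).symm

end Involution

section InternalProduct

variable {G : Type*} [Group G] {H K : Subgroup G}

noncomputable def Subgroup.supMulEquivProd (hcomm : ∀ h ∈ H, ∀ k ∈ K, Commute h k)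
    (hdisj : Disjoint H K) : ↥(H ⊔ K) ≃* H × K :=
  let f := H.subtype.noncommCoprod K.subtype fun h k => hcomm h h.2 k k.2
  have hf : Function.Injective f := (MonoidHom.noncommCoprod_injective _ _ _).mpr
    ⟨H.subtype_injective, K.subtype_injective,
      by rwa [Subgroup.range_subtype, Subgroup.range_subtype]⟩
  have hrange : f.range = H ⊔ K := (MonoidHom.noncommCoprod_range _ _ _).trans
    (by rw [Subgroup.range_subtype, Subgroup.range_subtype])
  (MulEquiv.subgroupCongr hrange).symm.trans (MonoidHom.ofInjective hf).symm

end InternalProduct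

open Quaternion ComplexConjugate

@[simp] lemma re_qi : qi.re = 0 := rfl
@[simp] lemma imI_qi : qi.imI = 1 := rfl
@[simp] lemma imJ_qi : qi.imJ = 0 := rfl
@[simp] lemma imK_qi : qi.imK = 0 := rfl
@[simp] lemma re_qj : qj.re = 0 := rfl
@[simp] lemma imI_qj : qj.imI = 0 := rfl
@[simp] lemma imJ_qj : qj.imJ = 1 := rfl
@[simp] lemma imK_qj : qj.imK = 0 := rfl

lemma qj_ne_zero : qj ≠ 0 := fun h => by simpa using congrArg (·.imJ) h

lemma qj_ne_one : qj ≠ 1 := fun h => by simpa using congrArg (·.imJ) h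

lemma qj_ne_neg_one : qj ≠ -1 := fun h => by simpa using congrArg (·.imJ) h

lemma qj_sq : qj ^ 2 = -1 := by
  rw [sq]; ext <;> simp

lemma qj_pow_four : qj ^ 4 = 1 := by
  rw [show 4 = 2 * 2 from rfl, pow_mul, qj_sq]; norm_num

lemma star_qj : star qj = qj ^ 3 := by
  rw [pow_succ, qj_sq]; ext <;> simp

lemma norm_qj_pow (n : ℕ) : ‖qj ^ n‖ = 1 := by
  rw [norm_pow, norm_qj, one_pow]

section Qrot

variable {l r l' r' : ℍ[ℝ]}

lemma qrot_apply (hl : ‖l‖ = 1) (hr : ‖r‖ = 1) (x : ℍ[ℝ]) :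
    qrot l r hl hr x = star l * x * r := rfl

lemma norm_mul_eq_one {a b : ℍ[ℝ]} (ha : ‖a‖ = 1) (hb : ‖b‖ = 1) : ‖a * b‖ = 1 := by
  rw [norm_mul, ha, hb, one_mul]

lemma qrot_mul (hl : ‖l‖ = 1) (hr : ‖r‖ = 1) (hl' : ‖l'‖ = 1) (hr' : ‖r'‖ = 1) :
    qrot l r hl hr * qrot l' r' hl' hr' =
      qrot (l' * l) (r' * r) (norm_mul_eq_one hl' hl) (norm_mul_eq_one hr' hr) := by
  refine LinearEquiv.ext fun x => ?_
  simp only [LinearEquiv.mul_apply, qrot_apply, star_mul]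
  noncomm_ring

lemma qrot_one_one : qrot 1 1 norm_one norm_one = 1 := by
  refine LinearEquiv.ext fun x => ?_
  simp [qrot_apply]

lemma qrot_neg_neg (hl : ‖l‖ = 1) (hr : ‖r‖ = 1) :
    qrot (-l) (-r) (by rwa [norm_neg]) (by rwa [norm_neg]) = qrot l r hl hr := by
  refine LinearEquiv.ext fun x => ?_
  simp [qrot_apply]

lemma qrot_pow (hl : ‖l‖ = 1) (hr : ‖r‖ = 1) (n : ℕ) :
    qrot l r hl hr ^ n = qrot (l ^ n) (r ^ n) (by rw [norm_pow, hl, one_pow])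
      (by rw [norm_pow, hr, one_pow]) := by
  induction n with
  | zero => simp only [pow_zero, qrot_one_one]
  | succ n ih => simp only [pow_succ, ih, qrot_mul, ← pow_succ']

lemma qrot_inv (hl : ‖l‖ = 1) (hr : ‖r‖ = 1) :
    (qrot l r hl hr)⁻¹ = qrot (star l) (star r) (by rwa [norm_star]) (by rwa [norm_star]) := by
  refine inv_eq_of_mul_eq_one_right ?_
  simp only [qrot_mul, star_mul_self_of_norm_one hl, star_mul_self_of_norm_one hr, qrot_one_one]

lemma eq_coe_re_of_commute_qi_qj {u : ℍ[ℝ]} (hi : Commute u qi) (hj : Commute u qj) :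
    u = u.re := by
  simp only [Commute, SemiconjBy, Quaternion.ext_iff] at hi hj
  simp at hi hj
  ext <;> simp <;> linarith

lemma qrot_eq_qrot_iff {hl : ‖l‖ = 1} {hr : ‖r‖ = 1} {hl' : ‖l'‖ = 1} {hr' : ‖r'‖ = 1} :
    qrot l r hl hr = qrot l' r' hl' hr' ↔ (l' = l ∧ r' = r) ∨ (l' = -l ∧ r' = -r) := by
  constructor
  · intro h
    set u := l' * star l with hu_def
    have hu_mul : ∀ x, u * x = x * (r' * star r) := fun x => by
      have hx := congrArg (fun y => l' * y * star r) (LinearEquiv.congr_fun h x)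
      simp only [qrot_apply] at hx
      calc u * x = l' * (star l * x * r) * star r := by
            rw [show l' * (star l * x * r) * star r = u * x * (r * star r) by
              rw [hu_def]; noncomm_ring, self_mul_star_of_norm_one hr, mul_one]
        _ = x * (r' * star r) := by
            rw [hx, ← mul_assoc, ← mul_assoc, self_mul_star_of_norm_one hl', one_mul, mul_assoc]
    have hur : u = r' * star r := by simpa using hu_mul 1
    -- `u` commutes with every quaternion, so it is a real unit
    have hu : u = (u.re : ℍ[ℝ]) := eq_coe_re_of_commute_qi_qj
      ((hu_mul qi).trans (by rw [hur])) ((hu_mul qj).trans (by rw [hur]))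
    have hu_abs : |u.re| = 1 := by
      rw [← Real.norm_eq_abs, ← norm_coe, ← hu, norm_mul, Quaternion.norm_star, hl, hl', one_mul]
    have hl_eq : l' = u * l := by rw [mul_assoc, star_mul_self_of_norm_one hl, mul_one]
    have hr_eq : r' = u * r := by rw [hur, mul_assoc, star_mul_self_of_norm_one hr, mul_one]
    rcases abs_eq zero_le_one |>.mp hu_abs with hu1 | hu1 <;> rw [hu1] at hu <;>
      rw [hu] at hl_eq hr_eq
    · exact Or.inl ⟨by simpa using hl_eq, by simpa using hr_eq⟩
    · exact Or.inr ⟨by simpa using hl_eq, by simpa using hr_eq⟩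
  · rintro (⟨rfl, rfl⟩ | ⟨rfl, rfl⟩)
    · rfl
    · exact (qrot_neg_neg hl hr).symm

end Qrot

section BinaryDihedral

lemma coeComplex_injective : Function.Injective ((↑) : ℂ → ℍ[ℝ]) :=
  ofComplex.toRingHom.injective

lemma star_coeComplex (z : ℂ) : star (z : ℍ[ℝ]) = ((conj z : ℂ) : ℍ[ℝ]) := by
  ext <;> simp

lemma qj_mul_coeComplex (z : ℂ) : qj * (z : ℍ[ℝ]) = ((conj z : ℂ) : ℍ[ℝ]) * qj := by
  ext <;> simp

lemma qi_eq_coeComplex_I : qi = ((Complex.I : ℂ) : ℍ[ℝ]) := by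
  ext <;> simp

lemma exists_qj_pow_mul_coeComplex (e : ℕ) (w : ℂ) :
    ∃ w' : ℂ, (w' = w ∨ w' = conj w) ∧ qj ^ e * (w : ℍ[ℝ]) = w' * qj ^ e := by
  induction e generalizing w with
  | zero => exact ⟨w, Or.inl rfl, by simp⟩
  | succ e ih =>
    obtain ⟨w', hw', h⟩ := ih (conj w)
    refine ⟨w', hw'.symm.imp (fun h => by rw [h, Complex.conj_conj]) id, ?_⟩
    rw [pow_succ, mul_assoc, qj_mul_coeComplex, ← mul_assoc, h, mul_assoc]

/-- For even `n`, the binary dihedral group of order `2n`. -/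
def binaryDihedral (n : ℕ) : Submonoid ℍ[ℝ] where
  carrier := {l | ∃ z : ℂ, z ^ n = 1 ∧ ∃ e : ℕ, l = z * qj ^ e}
  one_mem' := ⟨1, one_pow n, 0, by simp⟩
  mul_mem' := by
    rintro _ _ ⟨z, hz, e, rfl⟩ ⟨w, hw, f, rfl⟩
    obtain ⟨w', hw', hcomm⟩ := exists_qj_pow_mul_coeComplex e w
    refine ⟨z * w', ?_, e + f, ?_⟩
    · rcases hw' with rfl | rfl
      · rw [mul_pow, hz, hw, one_mul]
      · rw [mul_pow, hz, ← map_pow, hw, map_one, one_mul]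
    · rw [Quaternion.coeComplex_mul, pow_add, mul_assoc, ← mul_assoc (qj ^ e), hcomm]
      noncomm_ring

variable {n : ℕ} {l : ℍ[ℝ]}

lemma star_mem_binaryDihedral (hl : l ∈ binaryDihedral n) : star l ∈ binaryDihedral n := by
  obtain ⟨z, hz, e, rfl⟩ := hl
  obtain ⟨w', hw', hcomm⟩ := exists_qj_pow_mul_coeComplex (3 * e) (conj z)
  refine ⟨w', ?_, 3 * e, ?_⟩
  · rcases hw' with rfl | rfl
    · rw [← map_pow, hz, map_one]
    · rw [Complex.conj_conj, hz]
  · rw [star_mul, star_pow, star_qj, ← pow_mul, star_coeComplex, hcomm]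

lemma qj_mul_coeComplex_mul_qj_pow (z : ℂ) (e : ℕ) :
    qj * ((z : ℍ[ℝ]) * qj ^ e) = ((conj z : ℂ) : ℍ[ℝ]) * qj ^ (e + 1) := by
  rw [← mul_assoc, qj_mul_coeComplex, mul_assoc, pow_succ']

lemma mem_powers_qj_of_commute (hn : n ≠ 0) (hl : l ∈ binaryDihedral n) (h : l * qj = qj * l) :
    l ∈ Submonoid.powers qj := by
  obtain ⟨z, hz, e, rfl⟩ := hl
  rw [mul_assoc, ← pow_succ, qj_mul_coeComplex_mul_qj_pow] at h
  have hz_real : conj z = z :=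
    (coeComplex_injective (mul_right_cancel₀ (pow_ne_zero _ qj_ne_zero) h)).symm
  rw [Complex.conj_eq_iff_re] at hz_real
  rw [← hz_real, ← Complex.ofReal_pow, Complex.ofReal_eq_one, pow_eq_one_iff_of_ne_zero hn] at hz
  rcases hz with hre | ⟨hre, -⟩
  · exact ⟨e, by rw [← hz_real, hre]; simp⟩
  · refine ⟨e + 2, ?_⟩
    change qj ^ (e + 2) = _
    rw [← hz_real, hre, pow_add, qj_sq, mul_neg_one]
    ext <;> simp

lemma mul_qj_ne_neg_qj_mul {m : ℕ} (hm : Odd m) (hl : l ∈ binaryDihedral (2 * m)) :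
    l * qj ≠ -(qj * l) := by
  obtain ⟨z, hz, e, rfl⟩ := hl
  intro h
  rw [mul_assoc, ← pow_succ, qj_mul_coeComplex_mul_qj_pow, ← neg_mul] at h
  have hre : z.re = 0 := by
    have := congrArg (·.re) (mul_right_cancel₀ (pow_ne_zero _ qj_ne_zero) h)
    simp only [re_coeComplex, re_neg, Complex.conj_re] at this
    linarith
  -- `z` is purely imaginary, so `z ^ (2 * m) = -(im z) ^ (2 * m)` for odd `m`
  have hz_eq : z = (z.im : ℂ) * Complex.I := Complex.ext (by simp [hre]) (by simp)
  rw [hz_eq, mul_pow, pow_mul Complex.I, Complex.I_sq, hm.neg_one_pow, mul_neg_one,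
    ← Complex.ofReal_pow] at hz
  have hre' := congrArg Complex.re hz
  simp only [Complex.neg_re, Complex.ofReal_re, Complex.one_re] at hre'
  linarith [(even_two_mul m).pow_nonneg z.im]

end BinaryDihedral

section Rotations

def binaryDihedralRotations (p q : ℕ) : Subgroup (ℍ[ℝ] ≃ₗ[ℝ] ℍ[ℝ]) where
  carrier := {g | ∃ l ∈ binaryDihedral p, ∃ r ∈ binaryDihedral q,
    ∃ (hl : ‖l‖ = 1) (hr : ‖r‖ = 1), g = qrot l r hl hr}
  one_mem' := ⟨1, one_mem _, 1, one_mem _, norm_one, norm_one, qrot_one_one.symm⟩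
  mul_mem' := by
    rintro _ _ ⟨l, hl, r, hr, hl1, hr1, rfl⟩ ⟨l', hl', r', hr', hl1', hr1', rfl⟩
    exact ⟨l' * l, mul_mem hl' hl, r' * r, mul_mem hr' hr, _, _, qrot_mul hl1 hr1 hl1' hr1'⟩
  inv_mem' := by
    rintro _ ⟨l, hl, r, hr, hl1, hr1, rfl⟩
    exact ⟨star l, star_mem_binaryDihedral hl, star r, star_mem_binaryDihedral hr, _, _,
      qrot_inv hl1 hr1⟩

lemma coeComplex_mem_binaryDihedral {n : ℕ} {z : ℂ} (hz : z ^ n = 1) :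
    (z : ℍ[ℝ]) ∈ binaryDihedral n :=
  ⟨z, hz, 0, by simp⟩

lemma qj_mem_binaryDihedral (n : ℕ) : qj ∈ binaryDihedral n :=
  ⟨1, one_pow n, 1, by simp⟩

lemma es_eq_coeComplex (s : ℕ) :
    es s = ((Complex.exp ((π / s : ℝ) * Complex.I) : ℂ) : ℍ[ℝ]) := by
  ext <;> simp only [re_coeComplex, imI_coeComplex, imJ_coeComplex, imK_coeComplex,
    Complex.exp_ofReal_mul_I_re, Complex.exp_ofReal_mul_I_im] <;> rfl

lemma es_mem_binaryDihedral {m : ℕ} (hm : m ≠ 0) : es m ∈ binaryDihedral (2 * m) := by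
  refine es_eq_coeComplex m ▸ coeComplex_mem_binaryDihedral ?_
  rw [← Complex.exp_nat_mul, ← Complex.exp_two_pi_mul_I]
  congr 1
  push_cast
  field_simp

lemma G3_le_binaryDihedralRotations {m : ℕ} (hm : m ≠ 0) :
    G3 m ≤ binaryDihedralRotations (2 * m) 4 := by
  rw [G3, Subgroup.closure_le]
  rintro g (rfl | rfl | rfl | rfl)
  · exact ⟨_, es_mem_binaryDihedral hm, 1, one_mem _, _, _, rfl⟩
  · refine ⟨1, one_mem _, qi, ?_, _, _, rfl⟩
    rw [qi_eq_coeComplex_I]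
    exact coeComplex_mem_binaryDihedral Complex.I_pow_four
  · exact ⟨qj, qj_mem_binaryDihedral _, 1, one_mem _, _, _, rfl⟩
  · exact ⟨1, one_mem _, qj, qj_mem_binaryDihedral _, _, _, rfl⟩

end Rotations

section Normalizer

lemma qrot_eq_one_iff {l r : ℍ[ℝ]} {hl : ‖l‖ = 1} {hr : ‖r‖ = 1} :
    qrot l r hl hr = 1 ↔ (l = 1 ∧ r = 1) ∨ (l = -1 ∧ r = -1) := by
  rw [← qrot_one_one, eq_comm, qrot_eq_qrot_iff]

def qrotJOne : ℍ[ℝ] ≃ₗ[ℝ] ℍ[ℝ] := qrot qj 1 norm_qj norm_one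

def qrotJJ : ℍ[ℝ] ≃ₗ[ℝ] ℍ[ℝ] := qrot qj qj norm_qj norm_qj

lemma qrotJJ_sq : qrotJJ ^ 2 = 1 := by
  rw [qrotJJ, qrot_pow, qrot_eq_one_iff, qj_sq]
  simp

lemma orderOf_qrotJOne : orderOf qrotJOne = 4 := by
  refine orderOf_eq_prime_pow (p := 2) (n := 1) ?_ ?_
  · rw [qrotJOne, qrot_pow, qrot_eq_one_iff, pow_one, qj_sq]
    norm_num [Quaternion.ext_iff]
  · rw [qrotJOne, qrot_pow, qrot_eq_one_iff, show 2 ^ 2 = 4 from rfl, qj_pow_four]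
    simp

lemma orderOf_qrotJJ : orderOf qrotJJ = 2 :=
  orderOf_eq_prime qrotJJ_sq (by simp [qrotJJ, qrot_eq_one_iff, qj_ne_one, qj_ne_neg_one])

lemma commute_qrotJOne_qrotJJ : Commute qrotJOne qrotJJ := by
  simp [Commute, SemiconjBy, qrotJOne, qrotJJ, qrot_mul]

lemma disjoint_zpowers_qrotJOne_qrotJJ :
    Disjoint (Subgroup.zpowers qrotJOne) (Subgroup.zpowers qrotJJ) := by
  rw [Subgroup.disjoint_def]
  intro x hx hx'
  refine (eq_one_or_eq_of_mem_zpowers qrotJJ_sq hx').resolve_right ?_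
  rintro rfl
  have hfin : IsOfFinOrder qrotJOne := orderOf_pos_iff.mp (by rw [orderOf_qrotJOne]; norm_num)
  obtain ⟨k, hk⟩ := hfin.mem_powers_iff_mem_zpowers.mpr hx
  change qrotJOne ^ k = qrotJJ at hk
  rw [qrotJOne, qrot_pow, qrotJJ, qrot_eq_qrot_iff, one_pow] at hk
  rcases hk with ⟨-, h⟩ | ⟨-, h⟩
  · exact qj_ne_one h
  · exact qj_ne_neg_one h

lemma SigmaJJ_eq_zpowers : SigmaJJ = Subgroup.zpowers qrotJJ :=
  (Subgroup.zpowers_eq_closure _).symm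

lemma mem_normalizerInG3_iff {m : ℕ} {g : ℍ[ℝ] ≃ₗ[ℝ] ℍ[ℝ]} :
    g ∈ normalizerInG3 m ↔ Commute g qrotJJ ∧ g ∈ G3 m := by
  rw [normalizerInG3, SigmaJJ_eq_zpowers, Subgroup.mem_inf,
    mem_normalizer_zpowers_iff_commute qrotJJ_sq]

lemma qrot_qj_pow_mem_sup (a b : ℕ) :
    qrot (qj ^ a) (qj ^ b) (norm_qj_pow a) (norm_qj_pow b) ∈
      Subgroup.zpowers qrotJOne ⊔ Subgroup.zpowers qrotJJ := by
  have hOneJ : qrot 1 qj norm_one norm_qj = qrotJOne⁻¹ * qrotJJ := by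
    rw [qrotJOne, qrotJJ, qrot_inv, qrot_mul]
    simp [self_mul_star_of_norm_one norm_qj]
  have hsplit : qrot (qj ^ a) (qj ^ b) (norm_qj_pow a) (norm_qj_pow b) =
      qrotJOne ^ a * qrot 1 qj norm_one norm_qj ^ b := by
    simp [qrotJOne, qrot_pow, qrot_mul]
  rw [hsplit, hOneJ]
  exact mul_mem (pow_mem (Subgroup.mem_sup_left (Subgroup.mem_zpowers _)) _)
    (pow_mem (mul_mem (inv_mem (Subgroup.mem_sup_left (Subgroup.mem_zpowers _)))
      (Subgroup.mem_sup_right (Subgroup.mem_zpowers _))) _)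

lemma mem_sup_of_commute_qrotJJ {m : ℕ} (hm : Odd m) {g : ℍ[ℝ] ≃ₗ[ℝ] ℍ[ℝ]}
    (hg : g ∈ binaryDihedralRotations (2 * m) 4) (hcomm : Commute g qrotJJ) :
    g ∈ Subgroup.zpowers qrotJOne ⊔ Subgroup.zpowers qrotJJ := by
  obtain ⟨l, hl, r, hr, hl1, hr1, rfl⟩ := hg
  rw [Commute, SemiconjBy, qrotJJ, qrot_mul, qrot_mul, qrot_eq_qrot_iff] at hcomm
  rcases hcomm with ⟨hlj, hrj⟩ | ⟨hlj, -⟩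
  · obtain ⟨a, rfl⟩ := mem_powers_qj_of_commute (mul_ne_zero two_ne_zero hm.pos.ne') hl hlj
    obtain ⟨b, rfl⟩ := mem_powers_qj_of_commute (by norm_num) hr hrj
    exact qrot_qj_pow_mem_sup a b
  · exact absurd hlj (mul_qj_ne_neg_qj_mul hm hl)

lemma normalizerInG3_eq {m : ℕ} (hm : Odd m) :
    normalizerInG3 m = Subgroup.zpowers qrotJOne ⊔ Subgroup.zpowers qrotJJ := by
  have hJOne : qrotJOne ∈ G3 m := Subgroup.subset_closure (by simp [qrotJOne])
  have hOneJ : qrot 1 qj norm_one norm_qj ∈ G3 m := Subgroup.subset_closure (by simp)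
  have hJJ : qrotJJ ∈ G3 m := by
    have : qrotJJ = qrotJOne * qrot 1 qj norm_one norm_qj := by simp [qrotJOne, qrotJJ, qrot_mul]
    exact this ▸ mul_mem hJOne hOneJ
  apply le_antisymm
  · intro g hg
    obtain ⟨hcomm, hG3⟩ := mem_normalizerInG3_iff.mp hg
    exact mem_sup_of_commute_qrotJJ hm (G3_le_binaryDihedralRotations hm.pos.ne' hG3) hcomm
  · rw [sup_le_iff, Subgroup.zpowers_le, Subgroup.zpowers_le, mem_normalizerInG3_iff,
      mem_normalizerInG3_iff]
    exact ⟨⟨commute_qrotJOne_qrotJJ, hJOne⟩, ⟨Commute.refl _, hJJ⟩⟩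

end Normalizer

theorem normalizer_of_SigmaJJ_general (m : ℕ) (hodd : Odd m) :
    Nat.card (normalizerInG3 m) = 8 ∧
    Nonempty ((normalizerInG3 m) ≃* (Multiplicative (ZMod 4) × Multiplicative (ZMod 2))) := by
  have hcomm : ∀ g ∈ Subgroup.zpowers qrotJOne, ∀ h ∈ Subgroup.zpowers qrotJJ, Commute g h := by
    rintro _ ⟨a, rfl⟩ _ ⟨b, rfl⟩
    exact commute_qrotJOne_qrotJJ.zpow_zpow a b
  have iso : normalizerInG3 m ≃* Multiplicative (ZMod 4) × Multiplicative (ZMod 2) :=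
    (MulEquiv.subgroupCongr (normalizerInG3_eq hodd)).trans <|
      (Subgroup.supMulEquivProd hcomm disjoint_zpowers_qrotJOne_qrotJJ).trans <|
        MulEquiv.prodCongr (mulEquivOfCyclicCardEq (by simp [Nat.card_zpowers, orderOf_qrotJOne]))
          (mulEquivOfCyclicCardEq (by simp [Nat.card_zpowers, orderOf_qrotJJ]))
  exact ⟨by simp [Nat.card_congr iso.toEquiv], ⟨iso⟩⟩

/-- The normalizer of `Σ = ⟨[j,j]⟩` in `G₃(m)` has exactly 8 elements and is
isomorphic to `ℤ/4ℤ × ℤ/2ℤ`. -/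
theorem normalizer_of_SigmaJJ (m : ℕ) (hm : 3 ≤ m) (hodd : Odd m) :
    Nat.card (normalizerInG3 m) = 8 ∧
    Nonempty ((normalizerInG3 m) ≃* (Multiplicative (ZMod 4) × Multiplicative (ZMod 2))) :=
  normalizer_of_SigmaJJ_general m hodd
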